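/- arXiv:cs/0207037 — 2 statements merged into one kernel-verified Lean document; each statement's English description precedes it below -/
import Mathlib

section
/- If the set of propositional atoms of L_PL is nonempty, then ⊢_BD does not satisfy the property (B↛D): there exist an information set Γ ⊆ L, a set Ω ⊆ L_B, and a sentence φ ∈ L_B such that it is not the case that (Γ ⊢_BD φ̄ iff Γ_D ∪ Ω ⊢_BD φ̄). -/
/-! Take an atom `a`, `Γ = {a, ā}`, `Ω = ∅` and `φ = ⊤`. Rule (D) derives `⊤̄` from `Γ`
because `Γ_B ∪ {⊤} ⊢_PL a`. From `Γ_D = {ā}` alone it cannot: `⊤` is consistent, so (D⊥)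
does not apply, and (D) would need `{⊤} ⊢_PL a`, which the all-false valuation refutes. -/

/-- Propositional formulas over a set of atoms `A`, with the usual connectives,
`⊥` and `⊤`. -/
inductive PLForm (A : Type) : Type
  | atom   : A → PLForm A
  | falsum : PLForm A
  | verum  : PLForm A
  | neg    : PLForm A → PLForm A
  | conj   : PLForm A → PLForm A → PLForm A
  | disj   : PLForm A → PLForm A → PLForm A
  | impl   : PLForm A → PLForm A → PLForm A

/-- Evaluation of a propositional formula under a classical valuation. -/
def PLForm.eval {A : Type} (v : A → Bool) : PLForm A → Bool
  | .atom a   => v a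
  | .falsum   => false
  | .verum    => true
  | .neg φ    => !(PLForm.eval v φ)
  | .conj φ ψ => PLForm.eval v φ && PLForm.eval v ψ
  | .disj φ ψ => PLForm.eval v φ || PLForm.eval v ψ
  | .impl φ ψ => !(PLForm.eval v φ) || PLForm.eval v ψ

/-- Classical propositional consequence `X ⊢_PL φ`: every valuation satisfying
all members of `X` satisfies `φ`. -/
def PLCons {A : Type} (X : Set (PLForm A)) (φ : PLForm A) : Prop :=
  ∀ v : A → Bool, (∀ ψ ∈ X, PLForm.eval v ψ = true) → PLForm.eval v φ = true

/-- The language `L = L_B ∪ L_D`: a potential belief `φ` or a potential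
disbelief `φ̄` for each propositional formula `φ`. -/
inductive LSent (A : Type) : Type
  | bel : PLForm A → LSent A
  | dis : PLForm A → LSent A

/-- The set of potential beliefs `L_B`. -/
def LB (A : Type) : Set (LSent A) := Set.range LSent.bel

/-- The set of potential disbeliefs `L_D`. -/
def LD (A : Type) : Set (LSent A) := Set.range LSent.dis

/-- The propositional formulas believed in `Γ` (so that `Γ_B` corresponds to
`LSent.bel '' bels Γ = Γ ∩ LB A`). -/
def bels {A : Type} (Γ : Set (LSent A)) : Set (PLForm A) := {φ | LSent.bel φ ∈ Γ}

/-- The propositional formulas disbelieved in `Γ`. -/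
def diss {A : Type} (Γ : Set (LSent A)) : Set (PLForm A) := {φ | LSent.dis φ ∈ Γ}

/-- The logic WBD: smallest relation closed under (B), (D⊥) and (WD). -/
inductive WBD {A : Type} : Set (LSent A) → LSent A → Prop
  | B {Γ : Set (LSent A)} {φ : PLForm A} :
      PLCons (bels Γ) φ → WBD Γ (.bel φ)
  | Dbot {Γ : Set (LSent A)} {φ : PLForm A} :
      PLCons {φ} .falsum → WBD Γ (.dis φ)
  | WD {Γ : Set (LSent A)} {φ ψ : PLForm A} :
      LSent.dis ψ ∈ Γ → PLCons {φ} ψ → WBD Γ (.dis φ)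

/-- The logic GBD: smallest relation closed under (B), (D⊥) and (GD). -/
inductive GBD {A : Type} : Set (LSent A) → LSent A → Prop
  | B {Γ : Set (LSent A)} {φ : PLForm A} :
      PLCons (bels Γ) φ → GBD Γ (.bel φ)
  | Dbot {Γ : Set (LSent A)} {φ : PLForm A} :
      PLCons {φ} .falsum → GBD Γ (.dis φ)
  | GD {Γ : Set (LSent A)} {φ : PLForm A} :
      PLCons (PLForm.neg '' diss Γ) (.neg φ) → GBD Γ (.dis φ)

/-- The logic BD: smallest relation closed under (B), (D⊥) and (D). -/
inductive BD {A : Type} : Set (LSent A) → LSent A → Prop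
  | B {Γ : Set (LSent A)} {φ : PLForm A} :
      PLCons (bels Γ) φ → BD Γ (.bel φ)
  | Dbot {Γ : Set (LSent A)} {φ : PLForm A} :
      PLCons {φ} .falsum → BD Γ (.dis φ)
  | D {Γ : Set (LSent A)} {φ ψ : PLForm A} :
      LSent.dis ψ ∈ Γ → PLCons (insert φ (bels Γ)) ψ → BD Γ (.dis φ)

/-- The logic BN: smallest relation closed under (B), (D⊥), (WD) and (D→B). -/
inductive BN {A : Type} : Set (LSent A) → LSent A → Prop
  | B {Γ : Set (LSent A)} {φ : PLForm A} :
      PLCons (bels Γ) φ → BN Γ (.bel φ)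
  | Dbot {Γ : Set (LSent A)} {φ : PLForm A} :
      PLCons {φ} .falsum → BN Γ (.dis φ)
  | WD {Γ : Set (LSent A)} {φ ψ : PLForm A} :
      LSent.dis ψ ∈ Γ → PLCons {φ} ψ → BN Γ (.dis φ)
  | DtoB {Γ : Set (LSent A)} {φ : PLForm A} :
      BN Γ (.dis φ) → BN Γ (.bel (.neg φ))

/-- Satisfaction in a WBD-model `(M, 𝒩)` (also used for BD-models):
a belief `φ` holds iff `M ⊆ M(φ)`; a disbelief `φ̄` holds iff some
`N ∈ 𝒩` satisfies `N ⊆ M(¬φ)`. -/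
def satWBD {A : Type} (M : Set (A → Bool)) (𝒩 : Set (Set (A → Bool))) :
    LSent A → Prop
  | .bel φ => ∀ v ∈ M, PLForm.eval v φ = true
  | .dis φ => ∃ N ∈ 𝒩, ∀ v ∈ N, PLForm.eval v φ = false

/-- WBD-entailment: truth in all WBD-models (with `𝒩` nonempty) of `Γ`. -/
def WBDent {A : Type} (Γ : Set (LSent A)) (α : LSent A) : Prop :=
  ∀ (M : Set (A → Bool)) (𝒩 : Set (Set (A → Bool))), 𝒩.Nonempty →
    (∀ β ∈ Γ, satWBD M 𝒩 β) → satWBD M 𝒩 α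

/-- Satisfaction in a GBD-model `(M, N)`. -/
def satGBD {A : Type} (M N : Set (A → Bool)) : LSent A → Prop
  | .bel φ => ∀ v ∈ M, PLForm.eval v φ = true
  | .dis φ => ∀ v ∈ N, PLForm.eval v φ = false

/-- GBD-entailment: truth in all GBD-models of `Γ`. -/
def GBDent {A : Type} (Γ : Set (LSent A)) (α : LSent A) : Prop :=
  ∀ (M N : Set (A → Bool)), (∀ β ∈ Γ, satGBD M N β) → satGBD M N α

/-- BD-entailment: truth in all BD-models of `Γ`, i.e. WBD-models where
every `N ∈ 𝒩` is a subset of `M`. -/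
def BDent {A : Type} (Γ : Set (LSent A)) (α : LSent A) : Prop :=
  ∀ (M : Set (A → Bool)) (𝒩 : Set (Set (A → Bool))), 𝒩.Nonempty →
    (∀ N ∈ 𝒩, N ⊆ M) → (∀ β ∈ Γ, satWBD M 𝒩 β) → satWBD M 𝒩 α

/-- `Γ` is B-inconsistent iff `Γ_B ⊢_BD ⊥`. -/
def BIncons {A : Type} (Γ : Set (LSent A)) : Prop :=
  BD (Γ ∩ LB A) (.bel .falsum)

/-- `Γ` is D-inconsistent iff `Γ_D ⊢_BD ⊤̄`. -/
def DIncons {A : Type} (Γ : Set (LSent A)) : Prop :=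
  BD (Γ ∩ LD A) (.dis .verum)

/-- `Γ` is BD-inconsistent iff `Γ ⊢_BD φ` and `Γ ⊢_BD φ̄` for some `φ ∈ L_B`. -/
def BDIncons {A : Type} (Γ : Set (LSent A)) : Prop :=
  ∃ φ : PLForm A, BD Γ (.bel φ) ∧ BD Γ (.dis φ)

theorem PLCons.of_mem {A : Type} {X : Set (PLForm A)} {φ : PLForm A} (h : φ ∈ X) :
    PLCons X φ :=
  fun _ hv => hv φ h

theorem PLCons.insert_verum_iff {A : Type} {X : Set (PLForm A)} {φ : PLForm A} :
    PLCons (insert .verum X) φ ↔ PLCons X φ := by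
  simp [PLCons, PLForm.eval]

theorem not_PLCons_verum_falsum {A : Type} : ¬ PLCons {(.verum : PLForm A)} .falsum :=
  fun h => by simpa [PLForm.eval] using h (fun _ => false)

theorem not_PLCons_empty_atom {A : Type} (a : A) : ¬ PLCons ∅ (.atom a) :=
  fun h => by simpa [PLForm.eval] using h (fun _ => false)

theorem BD.dis_iff {A : Type} {Γ : Set (LSent A)} {φ : PLForm A} :
    BD Γ (.dis φ) ↔
      PLCons {φ} .falsum ∨ ∃ ψ ∈ diss Γ, PLCons (insert φ (bels Γ)) ψ := by
  constructor
  · intro h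
    cases h with
    | Dbot h => exact .inl h
    | D hψ h => exact .inr ⟨_, hψ, h⟩
  · rintro (h | ⟨ψ, hψ, h⟩)
    · exact .Dbot h
    · exact .D hψ h

theorem BD.dis_verum_iff {A : Type} {Γ : Set (LSent A)} :
    BD Γ (.dis .verum) ↔ ∃ ψ ∈ diss Γ, PLCons (bels Γ) ψ := by
  simp only [BD.dis_iff, PLCons.insert_verum_iff, not_PLCons_verum_falsum, false_or]

theorem bels_inter_LD {A : Type} (Γ : Set (LSent A)) : bels (Γ ∩ LD A) = ∅ := by
  ext φ
  simp [bels, LD]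

theorem diss_inter_LD {A : Type} (Γ : Set (LSent A)) : diss (Γ ∩ LD A) = diss Γ := by
  ext φ
  simp [diss, LD]

theorem diss_pair_bel_dis {A : Type} (φ : PLForm A) :
    diss {LSent.bel φ, LSent.dis φ} = {φ} := by
  ext ψ
  simp [diss]

/-- `⊢_BD` does not satisfy (B↛D): some `Γ`, `Ω ⊆ L_B` and `φ ∈ L_B`
witness the failure of the equivalence. -/
theorem bd_not_BnotD (A : Type) [Nonempty A] :
    ∃ (Γ Ω : Set (LSent A)) (φ : PLForm A), Ω ⊆ LB A ∧
      ¬ (BD Γ (.dis φ) ↔ BD ((Γ ∩ LD A) ∪ Ω) (.dis φ)) := by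
  obtain ⟨a⟩ := ‹Nonempty A›
  refine ⟨{.bel (.atom a), .dis (.atom a)}, ∅, .verum, Set.empty_subset _, ?_⟩
  rw [Set.union_empty, BD.dis_verum_iff, BD.dis_verum_iff, bels_inter_LD, diss_inter_LD,
    diss_pair_bel_dis]
  simp only [Set.mem_singleton_iff, exists_eq_left, not_PLCons_empty_atom, iff_false, not_not]
  exact PLCons.of_mem (by simp [bels])
end

section
/- If the set of propositional atoms of L_PL is nonempty, then there exists an information set Γ ⊆ L that is BD-inconsistent but not B-inconsistent (so the converse of 'B-inconsistent implies BD-inconsistent' fails). -/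
@[simp]
theorem bels_inter_LB {A : Type} (Γ : Set (LSent A)) : bels (Γ ∩ LB A) = bels Γ := by
  ext φ
  simp [bels, LB]

@[simp]
theorem bels_pair {A : Type} (φ : PLForm A) : bels {LSent.bel φ, LSent.dis φ} = {φ} := by
  ext ψ
  simp [bels]

theorem PLCons.falsum_iff {A : Type} {X : Set (PLForm A)} :
    PLCons X .falsum ↔ ¬ ∃ v : A → Bool, ∀ ψ ∈ X, PLForm.eval v ψ = true := by
  simp [PLCons, PLForm.eval]

theorem BD.bel_iff {A : Type} {Γ : Set (LSent A)} {φ : PLForm A} :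
    BD Γ (.bel φ) ↔ PLCons (bels Γ) φ :=
  ⟨fun h => by cases h; assumption, BD.B⟩

theorem BD.bel_of_mem {A : Type} {Γ : Set (LSent A)} {φ : PLForm A}
    (h : LSent.bel φ ∈ Γ) : BD Γ (.bel φ) :=
  BD.B fun _ hv => hv φ h

theorem BD.dis_of_mem {A : Type} {Γ : Set (LSent A)} {φ : PLForm A}
    (h : LSent.dis φ ∈ Γ) : BD Γ (.dis φ) :=
  BD.D h fun _ hv => hv φ (Set.mem_insert φ _)

theorem bIncons_iff {A : Type} {Γ : Set (LSent A)} :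
    BIncons Γ ↔ ¬ ∃ v : A → Bool, ∀ ψ ∈ bels Γ, PLForm.eval v ψ = true := by
  rw [BIncons, BD.bel_iff, bels_inter_LB, PLCons.falsum_iff]

theorem bdIncons_of_mem {A : Type} {Γ : Set (LSent A)} {φ : PLForm A}
    (hb : LSent.bel φ ∈ Γ) (hd : LSent.dis φ ∈ Γ) : BDIncons Γ :=
  ⟨φ, BD.bel_of_mem hb, BD.dis_of_mem hd⟩

/-- Rule (D) lets `φ̄` derive itself whatever the beliefs are, so believing and disbelieving
a satisfiable `φ` is BD-inconsistent while the beliefs alone remain satisfiable. -/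
theorem bdIncons_pair_and_not_bIncons {A : Type} {φ : PLForm A} {v : A → Bool}
    (hv : PLForm.eval v φ = true) :
    BDIncons {LSent.bel φ, LSent.dis φ} ∧ ¬ BIncons {LSent.bel φ, LSent.dis φ} := by
  refine ⟨bdIncons_of_mem (φ := φ) (by simp) (by simp), ?_⟩
  rw [bIncons_iff, bels_pair, not_not]
  exact ⟨v, by simpa using hv⟩

theorem bdIncons_not_bIncons_general (A : Type) :
    ∃ Γ : Set (LSent A), BDIncons Γ ∧ ¬ BIncons Γ :=
  ⟨_, bdIncons_pair_and_not_bIncons (φ := .verum) (v := fun _ => true) rfl⟩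

/-- The converse fails: some BD-inconsistent `Γ` is not B-inconsistent. -/
theorem bdIncons_not_bIncons (A : Type) [Nonempty A] :
    ∃ Γ : Set (LSent A), BDIncons Γ ∧ ¬ BIncons Γ :=
  bdIncons_not_bIncons_general A
end
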